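/- For every integer n > 2, every ν ≥ 0 and every x ≥ 0, the Dunkl–Szász–Beta operator applied to the identity function satisfies T_n(s; x) = (1/(n−2)) ( nx − (2ν/e_ν(nx)) Σ_{r=1}^∞ θ_r (nx)^r/γ_ν(r) ), where θ_r = 0 if r is even and θ_r = 1 if r is odd. -/

import Mathlib

/-!
The moments of the Beta kernel are Beta integrals,
`∫₀^∞ s^(k+1) (1+s)^(-(n+k)) ds = (k+1)! (n-3)! / (n+k-1)!`, which integration by parts reduces to
`∫₀^∞ (1+s)^(-(b+2)) ds = 1/(b+1)`. Multiplied by the binomial coefficient, the `r`-th term of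
`T_n(s; x)` becomes `r / ((n-1)(n-2)) · (nx)^r / γ_ν(r)`. The Dunkl recursion
`γ_ν(r+1) = (r + 1 + 2νθ_{r+1}) γ_ν(r)` then turns `Σ r (nx)^r / γ_ν(r)` into
`nx · e_ν(nx) - 2ν Σ θ_r (nx)^r / γ_ν(r)`.
-/

open MeasureTheory Filter

noncomputable def dGamma (ν : ℝ) (r : ℕ) : ℝ :=
  if r % 2 = 0 then
    2 ^ r * (Nat.factorial (r / 2)) * Real.Gamma ((r / 2 : ℕ) + ν + 1 / 2) / Real.Gamma (ν + 1 / 2)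
  else
    2 ^ r * (Nat.factorial (r / 2)) * Real.Gamma ((r / 2 : ℕ) + ν + 3 / 2) / Real.Gamma (ν + 1 / 2)

noncomputable def eDunkl (ν x : ℝ) : ℝ := ∑' r : ℕ, x ^ r / dGamma ν r

-- The paper's sum over `r ≥ 1` is indexed here by `k = r - 1`.
noncomputable def Tn (ν : ℝ) (n : ℕ) (g : ℝ → ℝ) (x : ℝ) : ℝ :=
  ((n : ℝ) - 1) / eDunkl ν (n * x) *
      ∑' k : ℕ, (Nat.choose (n + k - 1) k : ℝ) * (n * x) ^ (k + 1) / dGamma ν (k + 1) *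
        ∫ s in Set.Ioi (0 : ℝ), s ^ k / (1 + s) ^ (n + k) * g s
    + g 0 / eDunkl ν (n * x)

noncomputable def theta (k : ℕ) : ℝ := if k % 2 = 0 then 0 else 1

open Set Topology
open scoped Nat

lemma pow_mul_inv_one_add_pow_le {m j p : ℕ} (h : m + j ≤ p) {s : ℝ} (hs : 0 ≤ s) :
    s ^ m * ((1 + s) ^ p)⁻¹ ≤ ((1 + s) ^ j)⁻¹ := by
  have h1s : 1 ≤ 1 + s := by linarith
  rw [← div_eq_mul_inv, div_le_iff₀ (by positivity), inv_mul_eq_div, le_div_iff₀ (by positivity)]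
  calc s ^ m * (1 + s) ^ j ≤ (1 + s) ^ m * (1 + s) ^ j := by gcongr; linarith
    _ = (1 + s) ^ (m + j) := (pow_add _ _ _).symm
    _ ≤ (1 + s) ^ p := pow_le_pow_right₀ h1s h

lemma tendsto_pow_mul_inv_one_add_pow_atTop {m p : ℕ} (h : m < p) :
    Tendsto (fun s : ℝ => s ^ m * ((1 + s) ^ p)⁻¹) atTop (𝓝 0) := by
  have hinv : Tendsto (fun s : ℝ => ((1 + s) ^ 1)⁻¹) atTop (𝓝 0) := by
    simp only [pow_one]
    exact tendsto_inv_atTop_zero.comp (tendsto_atTop_add_const_left atTop (1 : ℝ) tendsto_id)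
  refine squeeze_zero' ?_ ?_ hinv
  all_goals filter_upwards [eventually_ge_atTop 0] with s hs
  · positivity
  · exact pow_mul_inv_one_add_pow_le h hs

lemma integrableOn_pow_mul_inv_one_add_pow {m p : ℕ} (h : m + 2 ≤ p) :
    IntegrableOn (fun s : ℝ => s ^ m * ((1 + s) ^ p)⁻¹) (Ioi 0) := by
  refine integrable_inv_one_add_sq.integrableOn.mono' (by fun_prop) ?_
  filter_upwards [ae_restrict_mem measurableSet_Ioi] with s (hs : 0 < s)
  rw [Real.norm_of_nonneg (by positivity)]
  calc s ^ m * ((1 + s) ^ p)⁻¹ ≤ ((1 + s) ^ 2)⁻¹ := pow_mul_inv_one_add_pow_le h hs.le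
    _ ≤ (1 + s ^ 2)⁻¹ := by gcongr; nlinarith

lemma hasDerivAt_pow_mul_inv_one_add_pow (a c : ℕ) {s : ℝ} (hs : 0 < 1 + s) :
    HasDerivAt (fun t : ℝ => t ^ a * ((1 + t) ^ c)⁻¹)
      (a * s ^ (a - 1) * ((1 + s) ^ c)⁻¹ - c * s ^ a * ((1 + s) ^ (c + 1))⁻¹) s := by
  have h : HasDerivAt (fun t : ℝ => t ^ a * ((1 + t) ^ c)⁻¹) _ s :=
    (hasDerivAt_pow a s).mul ((((hasDerivAt_id s).const_add 1).pow c).inv (pow_ne_zero c hs.ne'))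
  convert h using 1
  rcases c with _ | c
  · simp
  · simp only [id, mul_one, Nat.add_sub_cancel, Pi.pow_apply]
    field_simp
    ring

lemma integral_Ioi_inv_one_add_pow (b : ℕ) :
    ∫ s in Ioi (0 : ℝ), ((1 + s) ^ (b + 2))⁻¹ = 1 / (b + 1) := by
  have hderiv (s : ℝ) (hs : s ∈ Ici 0) : HasDerivAt (fun t : ℝ => -((1 + t) ^ (b + 1))⁻¹ / (b + 1))
      ((1 + s) ^ (b + 2))⁻¹ s := by
    have h : HasDerivAt (fun t : ℝ => -(t ^ 0 * ((1 + t) ^ (b + 1))⁻¹) / (b + 1)) _ s :=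
      ((hasDerivAt_pow_mul_inv_one_add_pow 0 (b + 1) (by simp at hs; linarith)).neg).div_const _
    convert h using 1
    · simp
    · field_simp
      push_cast
      ring
  have hlim := ((tendsto_pow_mul_inv_one_add_pow_atTop (m := 0) (p := b + 1) (by omega)).neg).div_const
    ((b : ℝ) + 1)
  rw [integral_Ioi_of_hasDerivAt_of_tendsto' hderiv
    (by simpa using integrableOn_pow_mul_inv_one_add_pow (m := 0) (p := b + 2) le_add_self)
    (by simpa using hlim)]
  simp [neg_div]

lemma integral_Ioi_pow_succ_mul_inv_one_add_pow (a b : ℕ) :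
    ((a : ℝ) + b + 2) * ∫ s in Ioi (0 : ℝ), s ^ (a + 1) * ((1 + s) ^ (a + b + 3))⁻¹ =
      (a + 1) * ∫ s in Ioi (0 : ℝ), s ^ a * ((1 + s) ^ (a + b + 2))⁻¹ := by
  have hderiv (s : ℝ) (hs : s ∈ Ici 0) :
      HasDerivAt (fun t : ℝ => t ^ (a + 1) * ((1 + t) ^ (a + b + 2))⁻¹)
        ((a + 1) * (s ^ a * ((1 + s) ^ (a + b + 2))⁻¹)
          - ((a : ℝ) + b + 2) * (s ^ (a + 1) * ((1 + s) ^ (a + b + 3))⁻¹)) s := by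
    convert hasDerivAt_pow_mul_inv_one_add_pow (a + 1) (a + b + 2) (by simp at hs; linarith)
      using 1
    push_cast
    ring
  have hint₁ := integrableOn_pow_mul_inv_one_add_pow (m := a) (p := a + b + 2) (by omega)
  have hint₂ := integrableOn_pow_mul_inv_one_add_pow (m := a + 1) (p := a + b + 3) (by omega)
  have h := integral_Ioi_of_hasDerivAt_of_tendsto' hderiv
    ((hint₁.const_mul _).sub (hint₂.const_mul _))
    (tendsto_pow_mul_inv_one_add_pow_atTop (by omega))
  rw [integral_sub (hint₁.const_mul _) (hint₂.const_mul _), integral_const_mul,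
    integral_const_mul] at h
  simp only [zero_pow (Nat.succ_ne_zero a), zero_mul, sub_zero, sub_eq_zero] at h
  exact h.symm

theorem integral_Ioi_pow_mul_inv_one_add_pow (a b : ℕ) :
    ∫ s in Ioi (0 : ℝ), s ^ a * ((1 + s) ^ (a + b + 2))⁻¹ = a ! * b ! / (a + b + 1)! := by
  induction a with
  | zero =>
    rw [Nat.factorial_succ]
    simpa [field] using integral_Ioi_inv_one_add_pow b
  | succ a ih =>
    have h := integral_Ioi_pow_succ_mul_inv_one_add_pow a b
    rw [ih, show a + b + 3 = a + 1 + b + 2 by omega] at h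
    generalize ∫ s in Ioi (0 : ℝ), s ^ (a + 1) * ((1 + s) ^ (a + 1 + b + 2))⁻¹ = I at h ⊢
    rw [show a + 1 + b + 1 = (a + b + 1) + 1 by omega, Nat.factorial_succ (a + b + 1),
      Nat.factorial_succ a]
    field_simp at h ⊢
    push_cast
    linear_combination h

section DunklCoefficients

variable {ν : ℝ}

lemma dGamma_pos (hν : -(1 / 2) < ν) (r : ℕ) : 0 < dGamma ν r := by
  have hΓ : 0 < Real.Gamma (ν + 1 / 2) := Real.Gamma_pos_of_pos (by linarith)
  have hr : (0 : ℝ) ≤ (r / 2 : ℕ) := Nat.cast_nonneg _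
  unfold dGamma
  split
  · have := Real.Gamma_pos_of_pos (s := (r / 2 : ℕ) + ν + 1 / 2) (by linarith)
    positivity
  · have := Real.Gamma_pos_of_pos (s := (r / 2 : ℕ) + ν + 3 / 2) (by linarith)
    positivity

lemma dGamma_zero (hν : -(1 / 2) < ν) : dGamma ν 0 = 1 := by
  have hΓ : Real.Gamma (ν + 1 / 2) ≠ 0 := (Real.Gamma_pos_of_pos (by linarith)).ne'
  simpa [dGamma, one_div] using hΓ

lemma dGamma_succ (hν : -(1 / 2) < ν) (k : ℕ) :
    dGamma ν (k + 1) = (k + 1 + 2 * ν * theta (k + 1)) * dGamma ν k := by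
  rcases Nat.even_or_odd' k with ⟨r, rfl | rfl⟩
  · have hΓ : Real.Gamma (r + ν + 3 / 2) = (r + ν + 1 / 2) * Real.Gamma (r + ν + 1 / 2) := by
      rw [show (r : ℝ) + ν + 3 / 2 = r + ν + 1 / 2 + 1 by ring,
        Real.Gamma_add_one (by have := r.cast_nonneg (α := ℝ); linarith)]
    simp only [dGamma, theta, show (2 * r + 1) % 2 = 1 by omega, show (2 * r) % 2 = 0 by omega,
      show (2 * r + 1) / 2 = r by omega, show 2 * r / 2 = r by omega]
    simp only [one_ne_zero, if_false, if_true, hΓ]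
    push_cast
    ring
  · simp only [dGamma, theta, show (2 * r + 1 + 1) % 2 = 0 by omega,
      show (2 * r + 1) % 2 = 1 by omega, show (2 * r + 1 + 1) / 2 = r + 1 by omega,
      show (2 * r + 1) / 2 = r by omega, Nat.factorial_succ]
    simp only [one_ne_zero, if_false, if_true]
    push_cast
    rw [show (r : ℝ) + 1 + ν + 1 / 2 = r + ν + 3 / 2 by ring]
    ring

lemma theta_nonneg (k : ℕ) : 0 ≤ theta k := by unfold theta; split <;> norm_num

lemma theta_le_one (k : ℕ) : theta k ≤ 1 := by unfold theta; split <;> norm_num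

lemma factorial_le_dGamma (hν : 0 ≤ ν) (k : ℕ) : (k ! : ℝ) ≤ dGamma ν k := by
  have hν' : -(1 / 2) < ν := by linarith
  induction k with
  | zero => simp [dGamma_zero hν']
  | succ k ih =>
    rw [dGamma_succ hν' k, Nat.factorial_succ, Nat.cast_mul]
    have := theta_nonneg (k + 1)
    gcongr
    push_cast
    nlinarith

end DunklCoefficients

section DunklSeries

variable {ν : ℝ}

lemma summable_pow_div_dGamma (hν : 0 ≤ ν) (y : ℝ) :
    Summable fun k : ℕ => y ^ k / dGamma ν k := by
  refine (Real.summable_pow_div_factorial |y|).of_norm_bounded fun k => ?_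
  have hγ := dGamma_pos (ν := ν) (by linarith) k
  rw [norm_div, norm_pow, Real.norm_eq_abs, Real.norm_of_nonneg hγ.le]
  exact div_le_div_of_nonneg_left (by positivity) (by positivity) (factorial_le_dGamma hν k)

lemma summable_theta_mul_pow_div_dGamma (hν : 0 ≤ ν) (y : ℝ) :
    Summable fun k : ℕ => theta k * y ^ k / dGamma ν k := by
  refine (summable_pow_div_dGamma hν y).norm.of_norm_bounded fun k => ?_
  rw [mul_div_assoc, norm_mul, Real.norm_of_nonneg (theta_nonneg k)]
  exact mul_le_of_le_one_left (norm_nonneg _) (theta_le_one k)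

lemma one_le_eDunkl (hν : 0 ≤ ν) {y : ℝ} (hy : 0 ≤ y) : 1 ≤ eDunkl ν y := by
  have hν' : -(1 / 2) < ν := by linarith
  have hpos (k : ℕ) : 0 ≤ y ^ k / dGamma ν k := div_nonneg (pow_nonneg hy k) (dGamma_pos hν' k).le
  rw [eDunkl]
  simpa [dGamma_zero hν'] using
    (summable_pow_div_dGamma hν y).le_tsum 0 fun k _ => hpos k

lemma tsum_succ_mul_pow_succ_div_dGamma (hν : 0 ≤ ν) (y : ℝ) :
    ∑' k : ℕ, (k + 1) * y ^ (k + 1) / dGamma ν (k + 1) =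
      y * eDunkl ν y - 2 * ν * ∑' k : ℕ, theta (k + 1) * y ^ (k + 1) / dGamma ν (k + 1) := by
  have hterm (k : ℕ) : (k + 1) * y ^ (k + 1) / dGamma ν (k + 1) =
      y * (y ^ k / dGamma ν k) - 2 * ν * (theta (k + 1) * y ^ (k + 1) / dGamma ν (k + 1)) := by
    have hν' : -(1 / 2) < ν := by linarith
    have hγ := dGamma_pos hν' k
    have hfactor : 0 < k + 1 + 2 * ν * theta (k + 1) := by
      have := theta_nonneg (k + 1)
      positivity
    rw [dGamma_succ hν' k]
    field_simp
    ring
  rw [tsum_congr hterm, Summable.tsum_sub ((summable_pow_div_dGamma hν y).mul_left y)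
    (((summable_nat_add_iff 1).2 (summable_theta_mul_pow_div_dGamma hν y)).mul_left _),
    tsum_mul_left, tsum_mul_left, eDunkl]

end DunklSeries

lemma choose_mul_integral_Ioi_pow_div_one_add_pow_mul_self {n : ℕ} (hn : 2 < n) (k : ℕ) :
    (Nat.choose (n + k - 1) k : ℝ) * ∫ s in Ioi (0 : ℝ), s ^ k / (1 + s) ^ (n + k) * s =
      (k + 1) / ((n - 1) * (n - 2)) := by
  obtain ⟨m, rfl⟩ : ∃ m, n = m + 3 := ⟨n - 3, by omega⟩
  have hintegrand : (fun s : ℝ => s ^ k / (1 + s) ^ (m + 3 + k) * s) =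
      fun s => s ^ (k + 1) * ((1 + s) ^ (k + 1 + m + 2))⁻¹ := by
    ext s
    rw [show k + 1 + m + 2 = m + 3 + k by omega, pow_succ]
    ring
  rw [hintegrand, integral_Ioi_pow_mul_inv_one_add_pow, show m + 3 + k - 1 = m + k + 2 by omega,
    Nat.cast_choose ℝ (by omega : k ≤ m + k + 2), show m + k + 2 - k = m + 2 by omega,
    show k + 1 + m + 1 = m + k + 2 by omega]
  simp only [Nat.factorial_succ]
  push_cast
  rw [show (m : ℝ) + 3 - 1 = m + 2 by ring, show (m : ℝ) + 3 - 2 = m + 1 by ring]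
  field_simp
  ring

theorem stmt17 (ν : ℝ) (hν : 0 ≤ ν) (n : ℕ) (hn : 2 < n) (x : ℝ) (hx : 0 ≤ x) :
    Tn ν n (fun s => s) x =
      1 / ((n : ℝ) - 2) *
        ((n : ℝ) * x -
          2 * ν / eDunkl ν (n * x) *
            ∑' r : ℕ, theta (r + 1) * (n * x) ^ (r + 1) / dGamma ν (r + 1)) := by
  simp only [Tn, zero_div, add_zero]
  set y := (n : ℝ) * x
  have hterm (k : ℕ) : (Nat.choose (n + k - 1) k : ℝ) * y ^ (k + 1) / dGamma ν (k + 1) *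
      ∫ s in Ioi (0 : ℝ), s ^ k / (1 + s) ^ (n + k) * s =
        (((n : ℝ) - 1) * (n - 2))⁻¹ * ((k + 1) * y ^ (k + 1) / dGamma ν (k + 1)) := by
    rw [mul_div_assoc, mul_right_comm, choose_mul_integral_Ioi_pow_div_one_add_pow_mul_self hn]
    ring
  have hE : eDunkl ν y ≠ 0 := (one_pos.trans_le (one_le_eDunkl hν (by positivity))).ne'
  have hn' : (2 : ℝ) < n := by exact_mod_cast hn
  have hn₁ : (n : ℝ) - 1 ≠ 0 := by linarith
  have hn₂ : (n : ℝ) - 2 ≠ 0 := by linarith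
  rw [tsum_congr hterm, tsum_mul_left, tsum_succ_mul_pow_succ_div_dGamma hν]
  field_simp
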